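/- For λ ∈ ℤ, λ > 0, λ ≢ ε (mod 2), the short exact sequence 0 → D_λ⁺ ⊕ D_λ⁻ → I_{λ,ε} → V_{λ−1} → 0 does not split: there is no sl₂-submodule of I_{λ,ε} complementary to D_λ⁺ ⊕ D_λ⁻. Equivalently, I_{λ,ε} contains no finite-dimensional nonzero sl₂-submodule. -/

import Mathlib

/-! The principal series module `I_{λ,ε}` in the compact picture: basis
`{w_k : k ≡ ε (mod 2)}`, parametrized as `k = ε + 2n`, with `w_{ε+2n}` encoded
as `Finsupp.single n 1` in `ℤ →₀ ℂ`. -/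

/-- `H · w_k = k · w_k`. -/
noncomputable def psH (ε : ℤ) : (ℤ →₀ ℂ) →ₗ[ℂ] (ℤ →₀ ℂ) :=
  Finsupp.lsum ℂ fun n : ℤ => (((ε + 2 * n : ℤ) : ℂ)) • Finsupp.lsingle n

/-- `E · w_k = ((λ+k+1)/2) · w_{k+2}`. -/
noncomputable def psE (L : ℂ) (ε : ℤ) : (ℤ →₀ ℂ) →ₗ[ℂ] (ℤ →₀ ℂ) :=
  Finsupp.lsum ℂ fun n : ℤ => ((L + ((ε + 2 * n : ℤ) : ℂ) + 1) / 2) • Finsupp.lsingle (n + 1)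

/-- `F · w_k = ((λ−k+1)/2) · w_{k−2}`. -/
noncomputable def psF (L : ℂ) (ε : ℤ) : (ℤ →₀ ℂ) →ₗ[ℂ] (ℤ →₀ ℂ) :=
  Finsupp.lsum ℂ fun n : ℤ => ((L - ((ε + 2 * n : ℤ) : ℂ) + 1) / 2) • Finsupp.lsingle (n - 1)

lemma psH_apply (ε : ℤ) (x : ℤ →₀ ℂ) (k : ℤ) :
    psH ε x k = ((ε + 2 * k : ℤ) : ℂ) * x k := by
  rw [psH, Finsupp.lsum_apply, Finsupp.sum_apply]
  rw [Finsupp.sum_eq_single k (fun n _ hnk => ?_) (fun _ => ?_)]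
  · rw [LinearMap.smul_apply, Finsupp.lsingle_apply, Finsupp.smul_apply,
      Finsupp.single_eq_same, smul_eq_mul]
  · rw [LinearMap.smul_apply, Finsupp.lsingle_apply, Finsupp.smul_apply,
      Finsupp.single_eq_of_ne' hnk, smul_zero]
  · rw [LinearMap.smul_apply, Finsupp.lsingle_apply]
    rw [Finsupp.single_zero, smul_zero, Finsupp.coe_zero, Pi.zero_apply]

lemma psE_single (L : ℂ) (ε : ℤ) (n : ℤ) (a : ℂ) :
    psE L ε (Finsupp.single n a)
      = ((L + ((ε + 2 * n : ℤ) : ℂ) + 1) / 2 * a) • Finsupp.single (n + 1) 1 := by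
  rw [psE, Finsupp.lsum_single, LinearMap.smul_apply, Finsupp.lsingle_apply,
    Finsupp.smul_single, Finsupp.smul_single, smul_eq_mul, smul_eq_mul, mul_one]

lemma psF_single (L : ℂ) (ε : ℤ) (n : ℤ) (a : ℂ) :
    psF L ε (Finsupp.single n a)
      = ((L - ((ε + 2 * n : ℤ) : ℂ) + 1) / 2 * a) • Finsupp.single (n - 1) 1 := by
  rw [psF, Finsupp.lsum_single, LinearMap.smul_apply, Finsupp.lsingle_apply,
    Finsupp.smul_single, Finsupp.smul_single, smul_eq_mul, smul_eq_mul, mul_one]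

lemma single_mem_of_mem (ε : ℤ) (W : Submodule ℂ (ℤ →₀ ℂ))
    (hH : ∀ x ∈ W, psH ε x ∈ W) :
    ∀ (c : ℕ) (x : ℤ →₀ ℂ), x.support.card = c → x ∈ W →
      ∀ n ∈ x.support, Finsupp.single n (x n) ∈ W := by
  intro c
  induction c using Nat.strong_induction_on with
  | _ c ih =>
    intro x hcard hx n hn
    by_cases hsub : x.support ⊆ {n}
    · have hx' : x = Finsupp.single n (x n) := by
        ext k
        by_cases hk : k = n
        · subst hk; rw [Finsupp.single_eq_same]
        · rw [Finsupp.single_eq_of_ne' (Ne.symm hk)]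
          by_contra hk0
          have : k ∈ x.support := Finsupp.mem_support_iff.mpr hk0
          exact hk (Finset.mem_singleton.mp (hsub this))
      rw [← hx']; exact hx
    · obtain ⟨m, hm, hmn⟩ : ∃ m ∈ x.support, m ≠ n := by
        by_contra h
        push_neg at h
        exact hsub fun k hk => Finset.mem_singleton.mpr (h k hk)
      set y : ℤ →₀ ℂ := psH ε x - ((ε + 2 * m : ℤ) : ℂ) • x with hy
      have hyW : y ∈ W := W.sub_mem (hH x hx) (W.smul_mem _ hx)
      have hyk : ∀ k, y k = ((2 * (k - m) : ℤ) : ℂ) * x k := by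
        intro k
        rw [hy, Finsupp.sub_apply, Finsupp.smul_apply, psH_apply, smul_eq_mul, ← sub_mul]
        congr 1
        push_cast
        ring
      have hsupp : y.support ⊆ x.support.erase m := by
        intro k hk
        rw [Finsupp.mem_support_iff, hyk] at hk
        rw [Finset.mem_erase, Finsupp.mem_support_iff]
        constructor
        · rintro rfl
          exact hk (by push_cast; ring_nf)
        · intro h0; exact hk (by rw [h0, mul_zero])
      have hcard' : y.support.card < c := by
        calc y.support.card ≤ (x.support.erase m).card := Finset.card_le_card hsupp
        _ < x.support.card := Finset.card_erase_lt_of_mem hm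
        _ = c := hcard
      have hny : n ∈ y.support := by
        rw [Finsupp.mem_support_iff, hyk]
        apply mul_ne_zero
        · have : (2 * (n - m) : ℤ) ≠ 0 := by omega
          exact_mod_cast Int.cast_ne_zero.mpr this
        · exact Finsupp.mem_support_iff.mp hn
      have hs := ih _ hcard' y rfl hyW n hny
      have hc0 : ((2 * (n - m) : ℤ) : ℂ) ≠ 0 := by
        have : (2 * (n - m) : ℤ) ≠ 0 := by omega
        exact_mod_cast Int.cast_ne_zero.mpr this
      have : Finsupp.single n (x n) = (((2 * (n - m) : ℤ) : ℂ))⁻¹ • Finsupp.single n (y n) := by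
        rw [hyk, Finsupp.smul_single, smul_eq_mul, inv_mul_cancel_left₀ hc0]
      rw [this]
      exact W.smul_mem _ hs

lemma not_fd_aux {M : Type*} [AddCommGroup M] [Module ℂ M] (W : Submodule ℂ M)
    (v : ℕ → M) (hv : LinearIndependent ℂ v) (hmem : ∀ i, v i ∈ W) :
    ¬ FiniteDimensional ℂ W := by
  intro hfin
  have hli : LinearIndependent ℂ (fun i : ℕ => (⟨v i, hmem i⟩ : W)) :=
    hv.of_comp W.subtype
  have := hli.lt_aleph0_of_finiteDimensional
  rw [Cardinal.mk_nat] at this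
  exact lt_irrefl _ this

lemma not_fd_of_family (W : Submodule ℂ (ℤ →₀ ℂ)) (g : ℕ → ℤ) (hg : Function.Injective g)
    (h : ∀ i, Finsupp.single (g i) (1 : ℂ) ∈ W) : ¬ FiniteDimensional ℂ W := by
  have hli0 : LinearIndependent ℂ (fun i : ℕ => Finsupp.single (g i) (1 : ℂ)) := by
    have h1 := (Finsupp.basisSingleOne (R := ℂ) (ι := ℤ)).linearIndependent.comp g hg
    rwa [Finsupp.coe_basisSingleOne] at h1
  exact not_fd_aux W _ hli0 h

/-- A subspace of `I_{λ,ε}` is sl₂-invariant if it is stable under `H`, `E` and `F`. -/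
def SL2Invariant (L : ℂ) (ε : ℤ) (W : Submodule ℂ (ℤ →₀ ℂ)) : Prop :=
  (∀ x ∈ W, psH ε x ∈ W) ∧ (∀ x ∈ W, psE L ε x ∈ W) ∧ (∀ x ∈ W, psF L ε x ∈ W)

/-- For `λ ∈ ℤ`, `λ > 0`, `λ ≢ ε (mod 2)`, the short exact sequence
`0 → D_λ⁺ ⊕ D_λ⁻ → I_{λ,ε} → V_{λ−1} → 0` does not split; equivalently, `I_{λ,ε}`
contains no nonzero finite-dimensional sl₂-submodule: every nonzero sl₂-invariant
subspace of `I_{λ,ε}` is infinite-dimensional. -/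
theorem no_finite_dimensional_submodule (lam ε : ℤ) (hε : ε = 0 ∨ ε = 1) (hpos : 0 < lam)
    (hpar : lam % 2 ≠ ε % 2) (W : Submodule ℂ (ℤ →₀ ℂ))
    (hW : SL2Invariant (lam : ℂ) ε W) (hW0 : W ≠ ⊥) :
    ¬ FiniteDimensional ℂ W := by
  obtain ⟨hH, hE, hF⟩ := hW
  obtain ⟨x, hxW, hx0⟩ := (Submodule.ne_bot_iff W).mp hW0
  obtain ⟨n, hn⟩ : x.support.Nonempty := Finsupp.support_nonempty_iff.mpr hx0
  have hxn : x n ≠ 0 := Finsupp.mem_support_iff.mp hn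
  have h1 : Finsupp.single n (x n) ∈ W := single_mem_of_mem ε W hH _ x rfl hxW n hn
  have h2 : Finsupp.single n (1 : ℂ) ∈ W := by
    have := W.smul_mem (x n)⁻¹ h1
    rwa [Finsupp.smul_single, smul_eq_mul, inv_mul_cancel₀ hxn] at this
  by_cases hcase : 0 < lam + ε + 2 * n + 1
  · -- go up with E
    have key : ∀ i : ℕ, Finsupp.single (n + i) (1 : ℂ) ∈ W := by
      intro i
      induction i with
      | zero => simpa using h2
      | succ i ihi =>
        set m : ℤ := n + i with hm
        have hc : ((lam : ℂ) + ((ε + 2 * m : ℤ) : ℂ) + 1) / 2 ≠ 0 := by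
          have hz : (lam + ε + 2 * m + 1 : ℤ) ≠ 0 := by omega
          have : ((lam + ε + 2 * m + 1 : ℤ) : ℂ) ≠ 0 := Int.cast_ne_zero.mpr hz
          intro h0
          apply this
          field_simp at h0
          push_cast
          push_cast at h0
          linear_combination h0
        have hEm := hE _ ihi
        rw [psE_single, mul_one] at hEm
        have := W.smul_mem (((lam : ℂ) + ((ε + 2 * m : ℤ) : ℂ) + 1) / 2)⁻¹ hEm
        rw [smul_smul, inv_mul_cancel₀ hc, one_smul] at this
        have hidx : (m + 1 : ℤ) = n + (i + 1 : ℕ) := by push_cast; ring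
        rwa [hidx] at this
    exact not_fd_of_family W (fun i => n + i) (fun a b hab => by dsimp at hab; omega) key
  · -- go down with F
    have key : ∀ i : ℕ, Finsupp.single (n - i) (1 : ℂ) ∈ W := by
      intro i
      induction i with
      | zero => simpa using h2
      | succ i ihi =>
        set m : ℤ := n - i with hm
        have hc : ((lam : ℂ) - ((ε + 2 * m : ℤ) : ℂ) + 1) / 2 ≠ 0 := by
          have hz : (lam - (ε + 2 * m) + 1 : ℤ) ≠ 0 := by omega
          have : ((lam - (ε + 2 * m) + 1 : ℤ) : ℂ) ≠ 0 := Int.cast_ne_zero.mpr hz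
          intro h0
          apply this
          field_simp at h0
          push_cast
          push_cast at h0
          linear_combination h0
        have hFm := hF _ ihi
        rw [psF_single, mul_one] at hFm
        have := W.smul_mem (((lam : ℂ) - ((ε + 2 * m : ℤ) : ℂ) + 1) / 2)⁻¹ hFm
        rw [smul_smul, inv_mul_cancel₀ hc, one_smul] at this
        have hidx : (m - 1 : ℤ) = n - (i + 1 : ℕ) := by push_cast; ring
        rwa [hidx] at this
    exact not_fd_of_family W (fun i => n - i) (fun a b hab => by dsimp at hab; omega) key
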